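/- The extensionality axiom is provable in GTNF: the sequent ⇒ ∀x∀y(∀z(z∈x↔z∈y)→x=y) is provable in the calculus GTNF. -/
import Mathlib


mutual
/-- Terms: bound variables, parameters, and complex terms `τxφ` formed by a
unary term-forming operator binding a variable in a formula. -/
inductive Tm : Type
  | var : ℕ → Tm
  | par : ℕ → Tm
  | tau : ℕ → Fm → Tm

/-- Formulas: atomic formulas (unary/binary predicates and identity) closed
under ¬, ∧, ∨, →, ↔, ∀, ∃. -/
inductive Fm : Type
  | pred1 : ℕ → Tm → Fm
  | pred2 : ℕ → Tm → Tm → Fm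
  | eq : Tm → Tm → Fm
  | neg : Fm → Fm
  | and : Fm → Fm → Fm
  | or : Fm → Fm → Fm
  | imp : Fm → Fm → Fm
  | iff : Fm → Fm → Fm
  | all : ℕ → Fm → Fm
  | ex : ℕ → Fm → Fm
end

/-- The membership atom `t ∈ t'` (the binary predicate with index 0). -/
def memF (t t' : Tm) : Fm := Fm.pred2 0 t t'

mutual
/-- Substitution of the term `u` for the bound variable `x` in a term. -/
def substT (x : ℕ) (u : Tm) : Tm → Tm
  | .var y => if y = x then u else .var y
  | .par a => .par a
  | .tau y φ => if y = x then .tau y φ else .tau y (substF x u φ)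

/-- Substitution `φ[x/u]` of the term `u` for the bound variable `x` in a formula. -/
def substF (x : ℕ) (u : Tm) : Fm → Fm
  | .pred1 n t => .pred1 n (substT x u t)
  | .pred2 n t t' => .pred2 n (substT x u t) (substT x u t')
  | .eq t t' => .eq (substT x u t) (substT x u t')
  | .neg φ => .neg (substF x u φ)
  | .and φ ψ => .and (substF x u φ) (substF x u ψ)
  | .or φ ψ => .or (substF x u φ) (substF x u ψ)
  | .imp φ ψ => .imp (substF x u φ) (substF x u ψ)
  | .iff φ ψ => .iff (substF x u φ) (substF x u ψ)
  | .all y φ => if y = x then .all y φ else .all y (substF x u φ)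
  | .ex y φ => if y = x then .ex y φ else .ex y (substF x u φ)
end

mutual
/-- Substitution of the parameter `b₂` for the parameter `b₁` in a term. -/
def substPT (b₁ b₂ : ℕ) : Tm → Tm
  | .var y => .var y
  | .par a => if a = b₁ then .par b₂ else .par a
  | .tau y φ => .tau y (substPF b₁ b₂ φ)

/-- Substitution `φ[b₁/b₂]` of the parameter `b₂` for the parameter `b₁` in a formula. -/
def substPF (b₁ b₂ : ℕ) : Fm → Fm
  | .pred1 n t => .pred1 n (substPT b₁ b₂ t)
  | .pred2 n t t' => .pred2 n (substPT b₁ b₂ t) (substPT b₁ b₂ t')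
  | .eq t t' => .eq (substPT b₁ b₂ t) (substPT b₁ b₂ t')
  | .neg φ => .neg (substPF b₁ b₂ φ)
  | .and φ ψ => .and (substPF b₁ b₂ φ) (substPF b₁ b₂ ψ)
  | .or φ ψ => .or (substPF b₁ b₂ φ) (substPF b₁ b₂ ψ)
  | .imp φ ψ => .imp (substPF b₁ b₂ φ) (substPF b₁ b₂ ψ)
  | .iff φ ψ => .iff (substPF b₁ b₂ φ) (substPF b₁ b₂ ψ)
  | .all y φ => .all y (substPF b₁ b₂ φ)
  | .ex y φ => .ex y (substPF b₁ b₂ φ)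
end

mutual
/-- Occurrence of the parameter `a` in a term. -/
def pOccT (a : ℕ) : Tm → Bool
  | .var _ => false
  | .par b => b == a
  | .tau _ φ => pOccF a φ

/-- Occurrence of the parameter `a` in a formula. -/
def pOccF (a : ℕ) : Fm → Bool
  | .pred1 _ t => pOccT a t
  | .pred2 _ t t' => pOccT a t || pOccT a t'
  | .eq t t' => pOccT a t || pOccT a t'
  | .neg φ => pOccF a φ
  | .and φ ψ => pOccF a φ || pOccF a ψ
  | .or φ ψ => pOccF a φ || pOccF a ψ
  | .imp φ ψ => pOccF a φ || pOccF a ψ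
  | .iff φ ψ => pOccF a φ || pOccF a ψ
  | .all _ φ => pOccF a φ
  | .ex _ φ => pOccF a φ
end

mutual
/-- Occurrence (free, bound or as a binder) of the variable `x` in a term. -/
def vOccT (x : ℕ) : Tm → Bool
  | .var y => y == x
  | .par _ => false
  | .tau y φ => y == x || vOccF x φ

/-- Occurrence (free, bound or as a binder) of the variable `x` in a formula. -/
def vOccF (x : ℕ) : Fm → Bool
  | .pred1 _ t => vOccT x t
  | .pred2 _ t t' => vOccT x t || vOccT x t'
  | .eq t t' => vOccT x t || vOccT x t'
  | .neg φ => vOccF x φ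
  | .and φ ψ => vOccF x φ || vOccF x ψ
  | .or φ ψ => vOccF x φ || vOccF x ψ
  | .imp φ ψ => vOccF x φ || vOccF x ψ
  | .iff φ ψ => vOccF x φ || vOccF x ψ
  | .all y φ => y == x || vOccF x φ
  | .ex y φ => y == x || vOccF x φ
end

/-- The parameter `a` is fresh for (does not occur in) the formula `φ`. -/
def FreshF (a : ℕ) (φ : Fm) : Prop := pOccF a φ = false

/-- The parameter `a` is fresh for the term `t`. -/
def FreshT (a : ℕ) (t : Tm) : Prop := pOccT a t = false

/-- The parameter `a` is fresh for every formula of the multiset `Γ`. -/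
def FreshM (a : ℕ) (Γ : Multiset Fm) : Prop := ∀ φ ∈ Γ, pOccF a φ = false

/-- Atomic formulas. -/
def Atomic : Fm → Prop
  | .pred1 _ _ => True
  | .pred2 _ _ _ => True
  | .eq _ _ => True
  | _ => False

/-- The constraints that a stratification assignment `σ` must satisfy on a formula:
for every membership atom `t ∈ t'` we need `σ t' = σ t + 1` and for every identity
atom `t = t'` we need `σ t = σ t'`. -/
def stratOK (σ : Tm → ℤ) : Fm → Prop
  | .pred2 0 t t' => σ t' = σ t + 1
  | .eq t t' => σ t = σ t'
  | .neg φ => stratOK σ φ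
  | .and φ ψ => stratOK σ φ ∧ stratOK σ ψ
  | .or φ ψ => stratOK σ φ ∧ stratOK σ ψ
  | .imp φ ψ => stratOK σ φ ∧ stratOK σ ψ
  | .iff φ ψ => stratOK σ φ ∧ stratOK σ ψ
  | .all _ φ => stratOK σ φ
  | .ex _ φ => stratOK σ φ
  | _ => True

/-- A formula is stratified if some integer assignment satisfies all its
atomic constraints. -/
def Stratified (φ : Fm) : Prop := ∃ σ : Tm → ℤ, stratOK σ φ

/-- Flags selecting the rules of the various sequent calculi considered. -/
structure Flags where
  /-- the rule (Cut) -/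
  cut : Bool := true
  /-- pure variant: (∀⇒),(⇒∃) restricted to instantiation by parameters -/
  pure : Bool := false
  /-- the rule (Ref) -/
  ref : Bool := false
  /-- the rule (2LL) for atomic formulas -/
  ll2 : Bool := false
  /-- the rule (Ext) -/
  ext : Bool := false
  /-- the rule (AV) -/
  av : Bool := false
  /-- the rule (ExtAV) -/
  extav : Bool := false
  /-- the rule (a⇒) -/
  aIntro : Bool := false
  /-- axiomatic sequents ⇒EXT -/
  axEXT : Bool := false
  /-- axiomatic sequents ⇒AV -/
  axAV : Bool := false
  /-- axiomatic sequents ⇒EXTAV -/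
  axEXTAV : Bool := false
  /-- Tennant's classical rules (⇒τ),(τ⇒) for the given relation `R` -/
  tenn : Option (Tm → Tm → Fm) := none
  /-- axiomatic sequents for both halves of the Hintikka axiom for the given `R` -/
  axHA : Option (Tm → Tm → Fm) := none
  /-- the NF rules (⇒=) and (=⇒) -/
  eqNF : Bool := false
  /-- the NF rules (Abs⇒) and (⇒Abs) -/
  abs : Bool := false
  /-- the rule (3LL) for ∈-atoms -/
  ll3 : Bool := false
  /-- the GTNF rules (⇒:) and (:⇒) -/
  colon : Bool := false
  /-- the rule (2LL') for ∈-atoms -/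
  ll2' : Bool := false
  /-- the rule (3LL') for =-atoms -/
  ll3' : Bool := false
  /-- axiomatic sequents of the axiomatic system for NF -/
  axNF : Bool := false

/-- `Dh F n Γ Δ` : the sequent `Γ ⇒ Δ` has a proof of height at most `n` in the
sequent calculus determined by the flags `F`. -/
inductive Dh (F : Flags) : ℕ → Multiset Fm → Multiset Fm → Prop
  | ax : ∀ n φ Γ Δ, Dh F (n+1) (φ ::ₘ Γ) (φ ::ₘ Δ)
  | cut : ∀ n φ Γ Δ Γ' Δ', F.cut = true →
      Dh F n Γ (φ ::ₘ Δ) → Dh F n (φ ::ₘ Γ') Δ' → Dh F (n+1) (Γ + Γ') (Δ + Δ')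
  | wL : ∀ n φ Γ Δ, Dh F n Γ Δ → Dh F (n+1) (φ ::ₘ Γ) Δ
  | wR : ∀ n φ Γ Δ, Dh F n Γ Δ → Dh F (n+1) Γ (φ ::ₘ Δ)
  | cL : ∀ n φ Γ Δ, Dh F n (φ ::ₘ φ ::ₘ Γ) Δ → Dh F (n+1) (φ ::ₘ Γ) Δ
  | cR : ∀ n φ Γ Δ, Dh F n Γ (φ ::ₘ φ ::ₘ Δ) → Dh F (n+1) Γ (φ ::ₘ Δ)
  | negL : ∀ n φ Γ Δ, Dh F n Γ (φ ::ₘ Δ) → Dh F (n+1) (Fm.neg φ ::ₘ Γ) Δ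
  | negR : ∀ n φ Γ Δ, Dh F n (φ ::ₘ Γ) Δ → Dh F (n+1) Γ (Fm.neg φ ::ₘ Δ)
  | andL : ∀ n φ ψ Γ Δ, Dh F n (φ ::ₘ ψ ::ₘ Γ) Δ → Dh F (n+1) (Fm.and φ ψ ::ₘ Γ) Δ
  | andR : ∀ n φ ψ Γ Δ, Dh F n Γ (φ ::ₘ Δ) → Dh F n Γ (ψ ::ₘ Δ) →
      Dh F (n+1) Γ (Fm.and φ ψ ::ₘ Δ)
  | orL : ∀ n φ ψ Γ Δ, Dh F n (φ ::ₘ Γ) Δ → Dh F n (ψ ::ₘ Γ) Δ →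
      Dh F (n+1) (Fm.or φ ψ ::ₘ Γ) Δ
  | orR : ∀ n φ ψ Γ Δ, Dh F n Γ (φ ::ₘ ψ ::ₘ Δ) → Dh F (n+1) Γ (Fm.or φ ψ ::ₘ Δ)
  | impL : ∀ n φ ψ Γ Δ, Dh F n Γ (φ ::ₘ Δ) → Dh F n (ψ ::ₘ Γ) Δ →
      Dh F (n+1) (Fm.imp φ ψ ::ₘ Γ) Δ
  | impR : ∀ n φ ψ Γ Δ, Dh F n (φ ::ₘ Γ) (ψ ::ₘ Δ) → Dh F (n+1) Γ (Fm.imp φ ψ ::ₘ Δ)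
  | iffL : ∀ n φ ψ Γ Δ, Dh F n Γ (φ ::ₘ ψ ::ₘ Δ) → Dh F n (φ ::ₘ ψ ::ₘ Γ) Δ →
      Dh F (n+1) (Fm.iff φ ψ ::ₘ Γ) Δ
  | iffR : ∀ n φ ψ Γ Δ, Dh F n (φ ::ₘ Γ) (ψ ::ₘ Δ) → Dh F n (ψ ::ₘ Γ) (φ ::ₘ Δ) →
      Dh F (n+1) Γ (Fm.iff φ ψ ::ₘ Δ)
  | allL : ∀ n x φ t Γ Δ, (F.pure = true → ∃ a, t = Tm.par a) →
      Dh F n (substF x t φ ::ₘ Γ) Δ → Dh F (n+1) (Fm.all x φ ::ₘ Γ) Δ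
  | exR : ∀ n x φ t Γ Δ, (F.pure = true → ∃ a, t = Tm.par a) →
      Dh F n Γ (substF x t φ ::ₘ Δ) → Dh F (n+1) Γ (Fm.ex x φ ::ₘ Δ)
  | allR : ∀ n x φ a Γ Δ, FreshF a φ → FreshM a Γ → FreshM a Δ →
      Dh F n Γ (substF x (Tm.par a) φ ::ₘ Δ) → Dh F (n+1) Γ (Fm.all x φ ::ₘ Δ)
  | exL : ∀ n x φ a Γ Δ, FreshF a φ → FreshM a Γ → FreshM a Δ →
      Dh F n (substF x (Tm.par a) φ ::ₘ Γ) Δ → Dh F (n+1) (Fm.ex x φ ::ₘ Γ) Δ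
  | ref : ∀ n t Γ Δ, F.ref = true → Dh F n (Fm.eq t t ::ₘ Γ) Δ → Dh F (n+1) Γ Δ
  | ll2 : ∀ n x φ t₁ t₂ Γ Δ, F.ll2 = true → Atomic φ →
      Dh F n Γ (Fm.eq t₁ t₂ ::ₘ Δ) → Dh F n Γ (substF x t₁ φ ::ₘ Δ) →
      Dh F (n+1) Γ (substF x t₂ φ ::ₘ Δ)
  | ext : ∀ n x φ ψ a Γ Δ, F.ext = true →
      FreshF a φ → FreshF a ψ → FreshM a Γ → FreshM a Δ →
      Dh F n (substF x (Tm.par a) φ ::ₘ Γ) (substF x (Tm.par a) ψ ::ₘ Δ) →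
      Dh F n (substF x (Tm.par a) ψ ::ₘ Γ) (substF x (Tm.par a) φ ::ₘ Δ) →
      Dh F (n+1) Γ (Fm.eq (Tm.tau x φ) (Tm.tau x ψ) ::ₘ Δ)
  | av : ∀ n x y φ Γ Δ, F.av = true → vOccF y φ = false →
      Dh F n (Fm.eq (Tm.tau x φ) (Tm.tau y (substF x (Tm.var y) φ)) ::ₘ Γ) Δ →
      Dh F (n+1) Γ Δ
  | extav : ∀ n x y φ ψ a b Γ Δ, F.extav = true → x ≠ y → a ≠ b →
      FreshF a φ → FreshF a ψ → FreshM a Γ → FreshM a Δ →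
      FreshF b φ → FreshF b ψ → FreshM b Γ → FreshM b Δ →
      Dh F n (Fm.eq (Tm.par a) (Tm.par b) ::ₘ substF x (Tm.par a) φ ::ₘ Γ)
        (substF y (Tm.par b) ψ ::ₘ Δ) →
      Dh F n (Fm.eq (Tm.par a) (Tm.par b) ::ₘ substF y (Tm.par b) ψ ::ₘ Γ)
        (substF x (Tm.par a) φ ::ₘ Δ) →
      Dh F (n+1) Γ (Fm.eq (Tm.tau x φ) (Tm.tau y ψ) ::ₘ Δ)
  | aIntro : ∀ n x φ a Γ Δ, F.aIntro = true → FreshF a φ → FreshM a Γ → FreshM a Δ →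
      Dh F n (Fm.eq (Tm.par a) (Tm.tau x φ) ::ₘ Γ) Δ → Dh F (n+1) Γ Δ
  | axEXT : ∀ n x φ ψ, F.axEXT = true →
      Dh F (n+1) 0 {Fm.imp (Fm.all x (Fm.iff φ ψ)) (Fm.eq (Tm.tau x φ) (Tm.tau x ψ))}
  | axAV : ∀ n x y φ, F.axAV = true → vOccF y φ = false →
      Dh F (n+1) 0 {Fm.eq (Tm.tau x φ) (Tm.tau y (substF x (Tm.var y) φ))}
  | axEXTAV : ∀ n x y φ ψ, F.axEXTAV = true → x ≠ y →
      Dh F (n+1) 0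
        {Fm.imp (Fm.all x (Fm.all y (Fm.imp (Fm.eq (Tm.var x) (Tm.var y)) (Fm.iff φ ψ))))
          (Fm.eq (Tm.tau x φ) (Tm.tau y ψ))}
  | tauR : ∀ n R x φ t a Γ Δ, F.tenn = some R → FreshF a φ → FreshM a Γ → FreshM a Δ →
      Dh F n (substF x (Tm.par a) φ ::ₘ Γ) (R (Tm.par a) t ::ₘ Δ) →
      Dh F n (R (Tm.par a) t ::ₘ Γ) (substF x (Tm.par a) φ ::ₘ Δ) →
      Dh F (n+1) Γ (Fm.eq t (Tm.tau x φ) ::ₘ Δ)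
  | tauL1 : ∀ n R x φ t b Γ Δ, F.tenn = some R →
      Dh F n Γ (substF x (Tm.par b) φ ::ₘ Δ) → Dh F n (R (Tm.par b) t ::ₘ Γ) Δ →
      Dh F (n+1) (Fm.eq t (Tm.tau x φ) ::ₘ Γ) Δ
  | tauL2 : ∀ n R x φ t b Γ Δ, F.tenn = some R →
      Dh F n Γ (R (Tm.par b) t ::ₘ Δ) → Dh F n (substF x (Tm.par b) φ ::ₘ Γ) Δ →
      Dh F (n+1) (Fm.eq t (Tm.tau x φ) ::ₘ Γ) Δ
  | axHA1 : ∀ n R x φ t, F.axHA = some R →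
      Dh F (n+1) {Fm.eq t (Tm.tau x φ)} {Fm.all x (Fm.iff φ (R (Tm.var x) t))}
  | axHA2 : ∀ n R x φ t, F.axHA = some R →
      Dh F (n+1) {Fm.all x (Fm.iff φ (R (Tm.var x) t))} {Fm.eq t (Tm.tau x φ)}
  | eqNFR : ∀ n t t' a Γ Δ, F.eqNF = true →
      FreshT a t → FreshT a t' → FreshM a Γ → FreshM a Δ →
      Dh F n (memF (Tm.par a) t ::ₘ Γ) (memF (Tm.par a) t' ::ₘ Δ) →
      Dh F n (memF (Tm.par a) t' ::ₘ Γ) (memF (Tm.par a) t ::ₘ Δ) →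
      Dh F (n+1) Γ (Fm.eq t t' ::ₘ Δ)
  | eqNFL : ∀ n t t' b Γ Δ, F.eqNF = true →
      Dh F n Γ (memF (Tm.par b) t ::ₘ memF (Tm.par b) t' ::ₘ Δ) →
      Dh F n (memF (Tm.par b) t ::ₘ memF (Tm.par b) t' ::ₘ Γ) Δ →
      Dh F (n+1) (Fm.eq t t' ::ₘ Γ) Δ
  | absL : ∀ n x φ t Γ Δ, F.abs = true → Stratified φ →
      Dh F n (substF x t φ ::ₘ Γ) Δ → Dh F (n+1) (memF t (Tm.tau x φ) ::ₘ Γ) Δ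
  | absR : ∀ n x φ t Γ Δ, F.abs = true → Stratified φ →
      Dh F n Γ (substF x t φ ::ₘ Δ) → Dh F (n+1) Γ (memF t (Tm.tau x φ) ::ₘ Δ)
  | ll3a : ∀ n t t' t'' Γ Δ, F.ll3 = true →
      Dh F n Γ (Fm.eq t t' ::ₘ Δ) → Dh F n Γ (memF t'' t ::ₘ Δ) →
      Dh F n (memF t'' t' ::ₘ Γ) Δ → Dh F (n+1) Γ Δ
  | ll3b : ∀ n t t' t'' Γ Δ, F.ll3 = true →
      Dh F n Γ (Fm.eq t t' ::ₘ Δ) → Dh F n Γ (memF t t'' ::ₘ Δ) →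
      Dh F n (memF t' t'' ::ₘ Γ) Δ → Dh F (n+1) Γ Δ
  | colonR : ∀ n x φ t a Γ Δ, F.colon = true → Stratified φ →
      FreshF a φ → FreshM a Γ → FreshM a Δ →
      Dh F n (substF x (Tm.par a) φ ::ₘ Γ) (memF (Tm.par a) t ::ₘ Δ) →
      Dh F n (memF (Tm.par a) t ::ₘ Γ) (substF x (Tm.par a) φ ::ₘ Δ) →
      Dh F (n+1) Γ (Fm.eq t (Tm.tau x φ) ::ₘ Δ)
  | colonL1 : ∀ n x φ t b Γ Δ, F.colon = true → Stratified φ →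
      Dh F n Γ (substF x (Tm.par b) φ ::ₘ Δ) → Dh F n (memF (Tm.par b) t ::ₘ Γ) Δ →
      Dh F (n+1) (Fm.eq t (Tm.tau x φ) ::ₘ Γ) Δ
  | colonL2 : ∀ n x φ t b Γ Δ, F.colon = true → Stratified φ →
      Dh F n Γ (memF (Tm.par b) t ::ₘ Δ) → Dh F n (substF x (Tm.par b) φ ::ₘ Γ) Δ →
      Dh F (n+1) (Fm.eq t (Tm.tau x φ) ::ₘ Γ) Δ
  | ll2'a : ∀ n t t' t'' Γ Δ, F.ll2' = true →
      Dh F n Γ (Fm.eq t t' ::ₘ Δ) → Dh F n Γ (memF t'' t ::ₘ Δ) →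
      Dh F (n+1) Γ (memF t'' t' ::ₘ Δ)
  | ll2'b : ∀ n t t' t'' Γ Δ, F.ll2' = true →
      Dh F n Γ (Fm.eq t t' ::ₘ Δ) → Dh F n Γ (memF t t'' ::ₘ Δ) →
      Dh F (n+1) Γ (memF t' t'' ::ₘ Δ)
  | ll3' : ∀ n t t' t'' Γ Δ, F.ll3' = true →
      Dh F n Γ (Fm.eq t t' ::ₘ Δ) → Dh F n Γ (Fm.eq t t'' ::ₘ Δ) →
      Dh F n (Fm.eq t' t'' ::ₘ Γ) Δ → Dh F (n+1) Γ Δ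
  | axNF1 : ∀ n x y φ, F.axNF = true → Stratified φ →
      Dh F (n+1) 0 {Fm.all x (Fm.iff (memF (Tm.var x) (Tm.tau y φ)) (substF y (Tm.var x) φ))}
  | axNF2 : ∀ n x y z, F.axNF = true → x ≠ y → x ≠ z → y ≠ z →
      Dh F (n+1) 0
        {Fm.all x (Fm.all y (Fm.all z (Fm.imp (Fm.eq (Tm.var x) (Tm.var y))
          (Fm.imp (memF (Tm.var x) (Tm.var z)) (memF (Tm.var y) (Tm.var z))))))}
  | axNF3 : ∀ n x y z, F.axNF = true → x ≠ y → x ≠ z → y ≠ z →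
      Dh F (n+1) 0
        {Fm.all x (Fm.all y (Fm.iff (Fm.eq (Tm.var x) (Tm.var y))
          (Fm.all z (Fm.iff (memF (Tm.var z) (Tm.var x)) (memF (Tm.var z) (Tm.var y))))))}

/-- Provability of the sequent `Γ ⇒ Δ` in the calculus determined by `F`. -/
def Proves (F : Flags) (Γ Δ : Multiset Fm) : Prop := ∃ n, Dh F n Γ Δ

/-- GC: classical first-order sequent calculus. -/
def GC : Flags := {}

/-- GCI: GC with the identity rules (Ref) and (2LL). -/
def GCI : Flags := { ref := true, ll2 := true }

/-- GPCI: the pure variant of GCI. -/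
def GPCI : Flags := { pure := true, ref := true, ll2 := true }

/-- GS: GPCI + (Ext) + (AV) + (a⇒). -/
def GS : Flags := { pure := true, ref := true, ll2 := true, ext := true, av := true, aIntro := true }

/-- GS': GPCI + (ExtAV) + (a⇒). -/
def GS' : Flags := { pure := true, ref := true, ll2 := true, extav := true, aIntro := true }

/-- GSNF: GPC + (⇒=) + (=⇒) + (Abs⇒) + (⇒Abs) + (3LL). -/
def GSNF : Flags := { pure := true, eqNF := true, abs := true, ll3 := true }

/-- GTNF: GPC + (⇒:) + (:⇒) + (Ref) + (2LL') + (3LL'). -/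
def GTNF : Flags := { pure := true, colon := true, ref := true, ll2' := true, ll3' := true }

/-- The axiomatic sequent system for NF: GC + the NF axiomatic sequents. -/
def NFax : Flags := { axNF := true }

theorem Dh.mono {F : Flags} {n : ℕ} {Γ Δ : Multiset Fm} (h : Dh F n Γ Δ) :
    ∀ m, n ≤ m → Dh F m Γ Δ := by
  induction h with
    (intro m hm;
     obtain ⟨k, hk, rfl⟩ : ∃ k, (∃ j, k = j + 1 ∨ True) ∧ m = k + 1 := ⟨m - 1, ⟨0, Or.inr trivial⟩, by omega⟩)
  | ax n φ Γ Δ => exact .ax k φ Γ Δ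
  | cut n φ Γ Δ Γ' Δ' hf h1 h2 ih1 ih2 =>
      exact .cut k φ Γ Δ Γ' Δ' hf (ih1 k (by omega)) (ih2 k (by omega))
  | wL n φ Γ Δ h ih => exact .wL k φ Γ Δ (ih k (by omega))
  | wR n φ Γ Δ h ih => exact .wR k φ Γ Δ (ih k (by omega))
  | cL n φ Γ Δ h ih => exact .cL k φ Γ Δ (ih k (by omega))
  | cR n φ Γ Δ h ih => exact .cR k φ Γ Δ (ih k (by omega))
  | negL n φ Γ Δ h ih => exact .negL k φ Γ Δ (ih k (by omega))
  | negR n φ Γ Δ h ih => exact .negR k φ Γ Δ (ih k (by omega))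
  | andL n φ ψ Γ Δ h ih => exact .andL k φ ψ Γ Δ (ih k (by omega))
  | andR n φ ψ Γ Δ h1 h2 ih1 ih2 => exact .andR k φ ψ Γ Δ (ih1 k (by omega)) (ih2 k (by omega))
  | orL n φ ψ Γ Δ h1 h2 ih1 ih2 => exact .orL k φ ψ Γ Δ (ih1 k (by omega)) (ih2 k (by omega))
  | orR n φ ψ Γ Δ h ih => exact .orR k φ ψ Γ Δ (ih k (by omega))
  | impL n φ ψ Γ Δ h1 h2 ih1 ih2 => exact .impL k φ ψ Γ Δ (ih1 k (by omega)) (ih2 k (by omega))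
  | impR n φ ψ Γ Δ h ih => exact .impR k φ ψ Γ Δ (ih k (by omega))
  | iffL n φ ψ Γ Δ h1 h2 ih1 ih2 => exact .iffL k φ ψ Γ Δ (ih1 k (by omega)) (ih2 k (by omega))
  | iffR n φ ψ Γ Δ h1 h2 ih1 ih2 => exact .iffR k φ ψ Γ Δ (ih1 k (by omega)) (ih2 k (by omega))
  | allL n x φ t Γ Δ hp h ih => exact .allL k x φ t Γ Δ hp (ih k (by omega))
  | exR n x φ t Γ Δ hp h ih => exact .exR k x φ t Γ Δ hp (ih k (by omega))
  | allR n x φ a Γ Δ f1 f2 f3 h ih => exact .allR k x φ a Γ Δ f1 f2 f3 (ih k (by omega))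
  | exL n x φ a Γ Δ f1 f2 f3 h ih => exact .exL k x φ a Γ Δ f1 f2 f3 (ih k (by omega))
  | ref n t Γ Δ hf h ih => exact .ref k t Γ Δ hf (ih k (by omega))
  | ll2 n x φ t₁ t₂ Γ Δ hf ha h1 h2 ih1 ih2 =>
      exact .ll2 k x φ t₁ t₂ Γ Δ hf ha (ih1 k (by omega)) (ih2 k (by omega))
  | ext n x φ ψ a Γ Δ hf f1 f2 f3 f4 h1 h2 ih1 ih2 =>
      exact .ext k x φ ψ a Γ Δ hf f1 f2 f3 f4 (ih1 k (by omega)) (ih2 k (by omega))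
  | av n x y φ Γ Δ hf hv h ih => exact .av k x y φ Γ Δ hf hv (ih k (by omega))
  | extav n x y φ ψ a b Γ Δ hf hxy hab f1 f2 f3 f4 f5 f6 f7 f8 h1 h2 ih1 ih2 =>
      exact .extav k x y φ ψ a b Γ Δ hf hxy hab f1 f2 f3 f4 f5 f6 f7 f8
        (ih1 k (by omega)) (ih2 k (by omega))
  | aIntro n x φ a Γ Δ hf f1 f2 f3 h ih => exact .aIntro k x φ a Γ Δ hf f1 f2 f3 (ih k (by omega))
  | axEXT n x φ ψ hf => exact .axEXT k x φ ψ hf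
  | axAV n x y φ hf hv => exact .axAV k x y φ hf hv
  | axEXTAV n x y φ ψ hf hxy => exact .axEXTAV k x y φ ψ hf hxy
  | tauR n R x φ t a Γ Δ hf f1 f2 f3 h1 h2 ih1 ih2 =>
      exact .tauR k R x φ t a Γ Δ hf f1 f2 f3 (ih1 k (by omega)) (ih2 k (by omega))
  | tauL1 n R x φ t b Γ Δ hf h1 h2 ih1 ih2 =>
      exact .tauL1 k R x φ t b Γ Δ hf (ih1 k (by omega)) (ih2 k (by omega))
  | tauL2 n R x φ t b Γ Δ hf h1 h2 ih1 ih2 =>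
      exact .tauL2 k R x φ t b Γ Δ hf (ih1 k (by omega)) (ih2 k (by omega))
  | axHA1 n R x φ t hf => exact .axHA1 k R x φ t hf
  | axHA2 n R x φ t hf => exact .axHA2 k R x φ t hf
  | eqNFR n t t' a Γ Δ hf fa fb f1 f2 h1 h2 ih1 ih2 =>
      exact .eqNFR k t t' a Γ Δ hf fa fb f1 f2 (ih1 k (by omega)) (ih2 k (by omega))
  | eqNFL n t t' b Γ Δ hf h1 h2 ih1 ih2 =>
      exact .eqNFL k t t' b Γ Δ hf (ih1 k (by omega)) (ih2 k (by omega))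
  | absL n x φ t Γ Δ hf hs h ih => exact .absL k x φ t Γ Δ hf hs (ih k (by omega))
  | absR n x φ t Γ Δ hf hs h ih => exact .absR k x φ t Γ Δ hf hs (ih k (by omega))
  | ll3a n t t' t'' Γ Δ hf h1 h2 h3 ih1 ih2 ih3 =>
      exact .ll3a k t t' t'' Γ Δ hf (ih1 k (by omega)) (ih2 k (by omega)) (ih3 k (by omega))
  | ll3b n t t' t'' Γ Δ hf h1 h2 h3 ih1 ih2 ih3 =>
      exact .ll3b k t t' t'' Γ Δ hf (ih1 k (by omega)) (ih2 k (by omega)) (ih3 k (by omega))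
  | colonR n x φ t a Γ Δ hf hs f1 f2 f3 h1 h2 ih1 ih2 =>
      exact .colonR k x φ t a Γ Δ hf hs f1 f2 f3 (ih1 k (by omega)) (ih2 k (by omega))
  | colonL1 n x φ t b Γ Δ hf hs h1 h2 ih1 ih2 =>
      exact .colonL1 k x φ t b Γ Δ hf hs (ih1 k (by omega)) (ih2 k (by omega))
  | colonL2 n x φ t b Γ Δ hf hs h1 h2 ih1 ih2 =>
      exact .colonL2 k x φ t b Γ Δ hf hs (ih1 k (by omega)) (ih2 k (by omega))
  | ll2'a n t t' t'' Γ Δ hf h1 h2 ih1 ih2 =>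
      exact .ll2'a k t t' t'' Γ Δ hf (ih1 k (by omega)) (ih2 k (by omega))
  | ll2'b n t t' t'' Γ Δ hf h1 h2 ih1 ih2 =>
      exact .ll2'b k t t' t'' Γ Δ hf (ih1 k (by omega)) (ih2 k (by omega))
  | ll3' n t t' t'' Γ Δ hf h1 h2 h3 ih1 ih2 ih3 =>
      exact .ll3' k t t' t'' Γ Δ hf (ih1 k (by omega)) (ih2 k (by omega)) (ih3 k (by omega))
  | axNF1 n x y φ hf hs => exact .axNF1 k x y φ hf hs
  | axNF2 n x y z hf h1 h2 h3 => exact .axNF2 k x y z hf h1 h2 h3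
  | axNF3 n x y z hf h1 h2 h3 => exact .axNF3 k x y z hf h1 h2 h3

namespace GTNFproof

abbrev P (Γ Δ : Multiset Fm) : Prop := Proves GTNF Γ Δ

lemma Pax {φ : Fm} {Γ Δ : Multiset Fm} : P (φ ::ₘ Γ) (φ ::ₘ Δ) := ⟨1, Dh.ax 0 φ Γ Δ⟩

lemma PwR {Γ Δ : Multiset Fm} (φ : Fm) (h : P Γ Δ) : P Γ (φ ::ₘ Δ) := by
  obtain ⟨n, h⟩ := h; exact ⟨n + 1, Dh.wR n φ Γ Δ h⟩

lemma PwL {Γ Δ : Multiset Fm} (φ : Fm) (h : P Γ Δ) : P (φ ::ₘ Γ) Δ := by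
  obtain ⟨n, h⟩ := h; exact ⟨n + 1, Dh.wL n φ Γ Δ h⟩

lemma Pref {Γ Δ : Multiset Fm} (t : Tm) (h : P (Fm.eq t t ::ₘ Γ) Δ) : P Γ Δ := by
  obtain ⟨n, h⟩ := h; exact ⟨n + 1, Dh.ref n t Γ Δ rfl h⟩

lemma PimpR {φ ψ : Fm} {Γ Δ : Multiset Fm} (h : P (φ ::ₘ Γ) (ψ ::ₘ Δ)) :
    P Γ (Fm.imp φ ψ ::ₘ Δ) := by
  obtain ⟨n, h⟩ := h; exact ⟨n + 1, Dh.impR n φ ψ Γ Δ h⟩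

lemma PiffL {φ ψ : Fm} {Γ Δ : Multiset Fm} (h1 : P Γ (φ ::ₘ ψ ::ₘ Δ))
    (h2 : P (φ ::ₘ ψ ::ₘ Γ) Δ) : P (Fm.iff φ ψ ::ₘ Γ) Δ := by
  obtain ⟨n1, h1⟩ := h1; obtain ⟨n2, h2⟩ := h2
  exact ⟨max n1 n2 + 1, Dh.iffL _ φ ψ Γ Δ (h1.mono _ (le_max_left ..)) (h2.mono _ (le_max_right ..))⟩

lemma PallR {x : ℕ} {φ : Fm} {Γ Δ : Multiset Fm} (a : ℕ) (f1 : FreshF a φ)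
    (f2 : FreshM a Γ) (f3 : FreshM a Δ) (h : P Γ (substF x (Tm.par a) φ ::ₘ Δ)) :
    P Γ (Fm.all x φ ::ₘ Δ) := by
  obtain ⟨n, h⟩ := h; exact ⟨n + 1, Dh.allR n x φ a Γ Δ f1 f2 f3 h⟩

lemma PallL {x : ℕ} {φ : Fm} {Γ Δ : Multiset Fm} (a : ℕ)
    (h : P (substF x (Tm.par a) φ ::ₘ Γ) Δ) : P (Fm.all x φ ::ₘ Γ) Δ := by
  obtain ⟨n, h⟩ := h; exact ⟨n + 1, Dh.allL n x φ (Tm.par a) Γ Δ (fun _ => ⟨a, rfl⟩) h⟩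

lemma Pll3' {Γ Δ : Multiset Fm} (t t' t'' : Tm) (h1 : P Γ (Fm.eq t t' ::ₘ Δ))
    (h2 : P Γ (Fm.eq t t'' ::ₘ Δ)) (h3 : P (Fm.eq t' t'' ::ₘ Γ) Δ) : P Γ Δ := by
  obtain ⟨n1, h1⟩ := h1; obtain ⟨n2, h2⟩ := h2; obtain ⟨n3, h3⟩ := h3
  refine ⟨max n1 (max n2 n3) + 1, Dh.ll3' _ t t' t'' Γ Δ rfl (h1.mono _ (le_max_left ..))
    (h2.mono _ ?_) (h3.mono _ ?_)⟩ <;> simp [le_max_iff]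

lemma PcolonR {x : ℕ} {φ : Fm} {t : Tm} {Γ Δ : Multiset Fm} (a : ℕ) (hs : Stratified φ)
    (f1 : FreshF a φ) (f2 : FreshM a Γ) (f3 : FreshM a Δ)
    (h1 : P (substF x (Tm.par a) φ ::ₘ Γ) (memF (Tm.par a) t ::ₘ Δ))
    (h2 : P (memF (Tm.par a) t ::ₘ Γ) (substF x (Tm.par a) φ ::ₘ Δ)) :
    P Γ (Fm.eq t (Tm.tau x φ) ::ₘ Δ) := by
  obtain ⟨n1, h1⟩ := h1; obtain ⟨n2, h2⟩ := h2
  exact ⟨max n1 n2 + 1, Dh.colonR _ x φ t a Γ Δ rfl hs f1 f2 f3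
    (h1.mono _ (le_max_left ..)) (h2.mono _ (le_max_right ..))⟩

lemma Psym {Γ Δ : Multiset Fm} {s t : Tm} (h : P Γ (Fm.eq s t ::ₘ Δ)) :
    P Γ (Fm.eq t s ::ₘ Δ) := by
  refine Pll3' s t s ?_ ?_ Pax
  · have := PwR (Fm.eq t s) h
    rwa [Multiset.cons_swap] at this
  · exact Pref s Pax

lemma Ptrans {Γ Δ : Multiset Fm} {t a b : Tm} (h1 : P Γ (Fm.eq t a ::ₘ Δ))
    (h2 : P Γ (Fm.eq t b ::ₘ Δ)) : P Γ (Fm.eq a b ::ₘ Δ) := by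
  refine Pll3' t a b ?_ ?_ Pax
  · have := PwR (Fm.eq a b) h1; rwa [Multiset.cons_swap] at this
  · have := PwR (Fm.eq a b) h2; rwa [Multiset.cons_swap] at this

end GTNFproof

open GTNFproof

/-- The extensionality axiom ∀x∀y(∀z(z∈x↔z∈y)→x=y) is provable in GTNF. -/
theorem extensionality_provable_in_GTNF (x y z : ℕ)
    (hxy : x ≠ y) (hxz : x ≠ z) (hyz : y ≠ z) :
    Proves GTNF 0
      {Fm.all x (Fm.all y (Fm.imp
        (Fm.all z (Fm.iff (memF (Tm.var z) (Tm.var x)) (memF (Tm.var z) (Tm.var y))))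
        (Fm.eq (Tm.var x) (Tm.var y))))} := by
  have hyx := Ne.symm hxy; have hzx := Ne.symm hxz; have hzy := Ne.symm hyz
  have hs : Stratified (memF (Tm.var 0) (Tm.par 0)) := by
    refine ⟨fun t => match t with | .var _ => 0 | _ => 1, ?_⟩
    simp [stratOK, memF]
  refine PallR 0 ?_ ?_ ?_ ?_
  · simp [FreshF, pOccF, pOccT, memF]
  · intro φ hφ; simp at hφ
  · intro φ hφ; simp at hφ
  simp only [substF, substT, memF, hyx, hzx, if_true, if_false, ite_true, ite_false,
    if_pos rfl, if_neg hyx, if_neg hzx]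
  refine PallR 1 ?_ ?_ ?_ ?_
  · simp [FreshF, pOccF, pOccT, memF]
  · intro φ hφ; simp at hφ
  · intro φ hφ; simp at hφ
  simp only [substF, substT, memF, if_true, ite_true, if_pos rfl, if_neg hzy]
  refine PimpR ?_
  refine Ptrans (t := Tm.tau 0 (memF (Tm.var 0) (Tm.par 0))) ?_ ?_
  · refine Psym (PcolonR 2 hs ?_ ?_ ?_ ?_ ?_)
    · simp [FreshF, pOccF, pOccT, memF]
    · intro φ hφ; simp at hφ; subst hφ; simp [pOccF, pOccT, memF]
    · intro φ hφ; simp at hφ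
    · simp only [substF, substT, memF, if_true, ite_true, if_pos rfl]; exact Pax
    · simp only [substF, substT, memF, if_true, ite_true, if_pos rfl]; exact Pax
  · refine Psym (PcolonR 2 hs ?_ ?_ ?_ ?_ ?_)
    · simp [FreshF, pOccF, pOccT, memF]
    · intro φ hφ; simp at hφ; subst hφ; simp [pOccF, pOccT, memF]
    · intro φ hφ; simp at hφ
    · -- A, K ⇒ B
      simp only [substF, substT, memF, if_true, ite_true, if_pos rfl]
      rw [Multiset.cons_swap]
      refine PallL 2 ?_
      simp only [substF, substT, memF, if_true, ite_true, if_pos rfl]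
      refine PiffL Pax ?_
      rw [Multiset.cons_swap]; exact Pax
    · -- B, K ⇒ A
      simp only [substF, substT, memF, if_true, ite_true, if_pos rfl]
      rw [Multiset.cons_swap]
      refine PallL 2 ?_
      simp only [substF, substT, memF, if_true, ite_true, if_pos rfl]
      refine PiffL ?_ Pax
      rw [Multiset.cons_swap]; exact Pax
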